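/- arXiv:2412.16864 — 5 statements merged into one kernel-verified Lean document; each statement's English description precedes it below -/
import Mathlib

section
/- Let Op₁, ..., Opₙ be operators with Opᵢ : Set Tᵢ₋₁ → Set Tᵢ, and predicates Fᵢ (selections on Set Tᵢ) with Fₙ selecting the target output. Suppose for each i the pushed-down selection Gᵢ satisfies Opᵢ(Gᵢ(X)) ⊇ Fᵢ(Opᵢ(X)) for all X ⊆ Tᵢ₋₁, where Fᵢ₋₁ = Gᵢ. Then (Opₙ ∘ ⋯ ∘ Op₁)(G₁(T₀)) ⊇ Fₙ((Opₙ ∘ ⋯ ∘ Op₁)(T₀)), i.e., the rows selected by G₁ on the source table suffice to produce the target output. -/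
/-- The pipeline `Opₙ ∘ ⋯ ∘ Op₁` applied to a source table. -/
def pipe {Ty : ℕ → Type*} (Op : ∀ i : ℕ, Set (Ty i) → Set (Ty (i + 1))) :
    ∀ n : ℕ, Set (Ty 0) → Set (Ty n)
  | 0 => id
  | n + 1 => fun X => Op n (pipe Op n X)

theorem stmt_3_general {Ty : ℕ → Type*} (Op : ∀ i : ℕ, Set (Ty i) → Set (Ty (i + 1)))
    (hmono : ∀ i : ℕ, ∀ X Y : Set (Ty i), X ⊆ Y → Op i X ⊆ Op i Y)
    (F : ∀ i : ℕ, Set (Ty i) → Set (Ty i))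
    (hpush : ∀ i : ℕ, ∀ X : Set (Ty i), F (i + 1) (Op i X) ⊆ Op i (F i X)) :
    ∀ (n : ℕ) (T₀ : Set (Ty 0)), F n (pipe Op n T₀) ⊆ pipe Op n (F 0 T₀) := by
  intro n T₀
  induction n with
  | zero => exact subset_rfl
  | succ n ih => exact (hpush n _).trans (hmono n _ _ ih)

/-- pushing predicates down through a pipeline: the rows selected by the
final pushed-down predicate on the source suffice to produce the target output. -/
theorem stmt_3 {Ty : ℕ → Type*} (Op : ∀ i : ℕ, Set (Ty i) → Set (Ty (i + 1)))
    (hmono : ∀ i : ℕ, ∀ X Y : Set (Ty i), X ⊆ Y → Op i X ⊆ Op i Y)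
    (F : ∀ i : ℕ, Set (Ty i) → Set (Ty i))
    (hFsel : ∀ i : ℕ, ∀ X : Set (Ty i), F i X ⊆ X)
    (hpush : ∀ i : ℕ, ∀ X : Set (Ty i), F (i + 1) (Op i X) ⊆ Op i (F i X)) :
    ∀ (n : ℕ) (T₀ : Set (Ty 0)), F n (pipe Op n T₀) ⊆ pipe Op n (F 0 T₀) :=
  stmt_3_general Op hmono F hpush
end

section
/- For the Filter operator Op(X) = {x ∈ X | p x} and a row-selection predicate F(Y) = {y ∈ Y | y = t₀}, the pushed-down predicate G(X) = {x ∈ X | x = t₀ ∧ p x} satisfies Op(G(X)) = F(Op(X)) for all X, and G(X) is the minimal subset S ⊆ X with Op(S) ⊇ F(Op(X)) whenever F(Op(X)) is nonempty. -/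
/-! Both sides of the pushdown equation are the set `G X` itself: selecting `t₀` after filtering
by `p` is the same as keeping the rows of `X` equal to `t₀` that satisfy `p`, and `Op` leaves
`G X` unchanged since all its rows satisfy `p`. Minimality follows because `Op S ⊆ S`. -/

theorem Set.sep_sep_eq_sep_and {α : Type*} (s : Set α) (p q : α → Prop) :
    {x ∈ {x ∈ s | p x} | q x} = {x ∈ s | q x ∧ p x} := by
  ext x
  simp only [Set.mem_ofPred_eq]
  tauto

/-- equivalent pushdown of a row-selection predicate through Filter,
and minimality of the pushed-down selection. -/
theorem stmt_5 {T : Type*} (p : T → Prop) (t₀ : T)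
    (Op : Set T → Set T) (hOp : ∀ X : Set T, Op X = {x ∈ X | p x})
    (F : Set T → Set T) (hFdef : ∀ Y : Set T, F Y = {y ∈ Y | y = t₀})
    (G : Set T → Set T) (hGdef : ∀ X : Set T, G X = {x ∈ X | x = t₀ ∧ p x}) :
    (∀ X : Set T, Op (G X) = F (Op X)) ∧
    (∀ X : Set T, (F (Op X)).Nonempty →
      G X ⊆ X ∧ F (Op X) ⊆ Op (G X) ∧
      ∀ S : Set T, S ⊆ X → F (Op X) ⊆ Op S → G X ⊆ S) := by
  have hGF (X : Set T) : G X = F (Op X) := by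
    rw [hGdef, hFdef, hOp, Set.sep_sep_eq_sep_and]
  have hOpG (X : Set T) : Op (G X) = G X := by
    rw [hOp, Set.sep_eq_self_iff_mem_true, hGdef]
    exact fun x hx => hx.2.2
  have pushdown (X : Set T) : Op (G X) = F (Op X) := (hOpG X).trans (hGF X)
  refine ⟨pushdown, fun X _ => ⟨?_, (pushdown X).ge, fun S _ hS => ?_⟩⟩
  · rw [hGdef]
    exact Set.sep_subset _ _
  · calc G X = F (Op X) := hGF X
      _ ⊆ Op S := hS
      _ = {x ∈ S | p x} := hOp S
      _ ⊆ S := Set.sep_subset _ _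
end

section
/- For the GroupBy-count operator Op(X) = {(g, |{x ∈ X | key x = g}|) | g ∈ key '' X} over a finite table X, and target output row (g₀, c₀) ∈ Op(X), the subset G(X) = {x ∈ X | key x = g₀} is the unique minimal subset S ⊆ X such that (g₀, c₀) ∈ Op(S). -/
/-- GroupBy-count operator: each group key paired with the number of rows in the group. -/
def groupCount {T K : Type*} [DecidableEq T] [DecidableEq K] (key : T → K)
    (X : Finset T) : Set (K × ℕ) :=
  {p | p.1 ∈ X.image key ∧ p.2 = (X.filter fun x => key x = p.1).card}

namespace groupCount

variable {T K : Type*} [DecidableEq T] [DecidableEq K] {key : T → K} {g : K} {c : ℕ}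

theorem mem_iff {S : Finset T} :
    (g, c) ∈ groupCount key S ↔
      g ∈ S.image key ∧ c = (S.filter fun x => key x = g).card :=
  Iff.rfl

theorem mem_filter_key_iff {S : Finset T} :
    (g, c) ∈ groupCount key (S.filter fun x => key x = g) ↔ (g, c) ∈ groupCount key S := by
  simp only [mem_iff, Finset.filter_filter, and_self, Finset.mem_image, Finset.mem_filter]
  constructor
  · rintro ⟨⟨x, ⟨hxS, -⟩, hx⟩, hc⟩
    exact ⟨⟨x, hxS, hx⟩, hc⟩
  · rintro ⟨⟨x, hxS, hx⟩, hc⟩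
    exact ⟨⟨x, ⟨hxS, hx⟩, hx⟩, hc⟩

-- The count pins down the size of the group.
theorem filter_key_eq_of_subset {S X : Finset T} (hSX : S ⊆ X)
    (hS : (g, c) ∈ groupCount key S) (hX : (g, c) ∈ groupCount key X) :
    (S.filter fun x => key x = g) = X.filter fun x => key x = g :=
  Finset.eq_of_subset_of_card_le (Finset.filter_subset_filter _ hSX) (hX.2.symm.trans hS.2).le

theorem notMem_of_ssubset_filter_key {S X : Finset T}
    (hS : S ⊂ X.filter fun x => key x = g) (hX : (g, c) ∈ groupCount key X) :
    (g, c) ∉ groupCount key S := by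
  intro hmem
  have hgroup := filter_key_eq_of_subset (hS.subset.trans (Finset.filter_subset _ _)) hmem hX
  exact (Finset.filter_subset _ S).not_ssubset (hgroup ▸ hS)

theorem eq_filter_key_of_minimal {S X : Finset T} (hSX : S ⊆ X)
    (hS : (g, c) ∈ groupCount key S) (hX : (g, c) ∈ groupCount key X)
    (hmin : ∀ S' ⊂ S, (g, c) ∉ groupCount key S') :
    S = X.filter fun x => key x = g := by
  have hself : (S.filter fun x => key x = g) = S := by
    by_contra hne
    exact hmin _ ((Finset.filter_subset _ _).ssubset_of_ne hne)
      (mem_filter_key_iff.mpr hS)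
  rw [← hself, filter_key_eq_of_subset hSX hS hX]

end groupCount

/-- for GroupBy-count the whole group is the unique minimal subset
producing the output row `(g₀, c₀)`. -/
theorem stmt_7 {T K : Type*} [DecidableEq T] [DecidableEq K] (key : T → K)
    (X : Finset T) (g₀ : K) (c₀ : ℕ) (hout : (g₀, c₀) ∈ groupCount key X)
    (G : Finset T) (hG : G = X.filter fun x => key x = g₀) :
    G ⊆ X ∧ (g₀, c₀) ∈ groupCount key G ∧
    (∀ S' ⊂ G, (g₀, c₀) ∉ groupCount key S') ∧
    (∀ S ⊆ X, (g₀, c₀) ∈ groupCount key S →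
      (∀ S' ⊂ S, (g₀, c₀) ∉ groupCount key S') → S = G) := by
  subst hG
  exact ⟨Finset.filter_subset _ _, groupCount.mem_filter_key_iff.mpr hout,
    fun _ hS' => groupCount.notMem_of_ssubset_filter_key hS' hout,
    fun _ hSX hS hmin => groupCount.eq_filter_key_of_minimal hSX hS hout hmin⟩
end

section
/- GroupBy with max aggregation has lineage strictly smaller than the full group: for Op(X) = {(g, max of val over {x ∈ X | key x = g}) | g ∈ key '' X}, if the group of g₀ in X has at least two rows and a unique row x* attaining the maximum value, then {x*} is a minimal subset S with (g₀, val x*) ∈ Op(S), and it is a proper subset of {x ∈ X | key x = g₀}. -/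
/-- GroupBy-max operator: each group key paired with the maximum `val` over the group. -/
def groupMax {T K : Type*} [DecidableEq T] [DecidableEq K] (key : T → K) (val : T → ℤ)
    (X : Finset T) : Set (K × ℤ) :=
  {p | p.1 ∈ X.image key ∧ p.2 ∈ (X.filter fun x => key x = p.1).image val ∧
    ∀ y ∈ X.filter fun x => key x = p.1, val y ≤ p.2}

/-- for GroupBy-max with a unique max-attaining row `x*`, the singleton
`{x*}` is a minimal producing subset and a proper subset of the full group. -/
theorem stmt_8 {T K : Type*} [DecidableEq T] [DecidableEq K] (key : T → K) (val : T → ℤ)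
    (X : Finset T) (g₀ : K) (xstar : T)
    (hx : xstar ∈ X.filter fun x => key x = g₀)
    (hcard : 2 ≤ (X.filter fun x => key x = g₀).card)
    (hmax : ∀ y ∈ X.filter fun x => key x = g₀, val y ≤ val xstar)
    (huniq : ∀ y ∈ X.filter fun x => key x = g₀, val y = val xstar → y = xstar) :
    ((g₀, val xstar) ∈ groupMax key val {xstar} ∧
      ∀ S' ⊂ ({xstar} : Finset T), (g₀, val xstar) ∉ groupMax key val S') ∧
    ({xstar} : Finset T) ⊂ X.filter fun x => key x = g₀ := by
  simp only [Finset.mem_filter] at hx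
  obtain ⟨hxX, hkey⟩ := hx
  refine ⟨⟨?_, ?_⟩, ?_⟩
  · exact ⟨by simp [hkey], by simp [hkey], by simp⟩
  · intro S' hS' hmem
    rw [Finset.ssubset_singleton_iff] at hS'
    subst hS'
    simpa [groupMax] using hmem.1
  · rw [Finset.ssubset_iff_of_subset]
    · have : ∃ y ∈ X.filter fun x => key x = g₀, y ≠ xstar := by
        by_contra h
        push_neg at h
        have : (X.filter fun x => key x = g₀) ⊆ {xstar} := fun y hy => by
          simp [h y hy]
        have := Finset.card_le_card this
        simp at this
        omega
      obtain ⟨y, hy, hne⟩ := this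
      exact ⟨y, hy, by simp [hne]⟩
    · intro y hy
      simp at hy
      subst hy
      simp [hxX, hkey]
end

section
/- For a two-table equi-semijoin query, the iterative refinement achieves zero false positives: with finite tables O (outer) and L (inner), selections σ_O, σ_L, and semijoin output Out = {o ∈ σ_O(O) | ∃ l ∈ σ_L(L), key o = key l}, the fixpoint sets O* = {o ∈ σ_O(O) | key o ∈ key '' σ_L(L)} and L* = {l ∈ σ_L(L) | key l ∈ key '' σ_O(O)} satisfy: O* equals the union over all t ∈ Out of the lineage of t in O, and L* equals the union over all t ∈ Out of the lineage of t in L, when the target predicate selects the entire output (F = True on Out). -/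
namespace Set

variable {α β K : Type*} (f : α → K) (g : β → K) (A : Set α) (B : Set β)

theorem sep_mem_image_eq_sep_exists :
    {a ∈ A | f a ∈ g '' B} = {a ∈ A | ∃ b ∈ B, f a = g b} := by
  ext a
  simp only [mem_sep_iff, mem_image, eq_comm]

theorem sep_mem_image_eq_biUnion_sep :
    {b ∈ B | g b ∈ f '' A} = ⋃ a ∈ {a ∈ A | ∃ b ∈ B, f a = g b}, {b ∈ B | g b = f a} := by
  ext b
  simp only [mem_sep_iff, mem_image, mem_iUnion, exists_prop]
  constructor
  · rintro ⟨hb, a, ha, hab⟩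
    exact ⟨a, ⟨ha, b, hb, hab⟩, hb, hab.symm⟩
  · rintro ⟨a, ⟨ha, -⟩, hb, hab⟩
    exact ⟨hb, a, ha, hab.symm⟩

end Set

theorem stmt_14_general {OT LT K : Type*} (keyO : OT → K) (keyL : LT → K)
    (O : Set OT) (L : Set LT)
    (σO : Set OT → Set OT) (σL : Set LT → Set LT)
    (Out : Set OT) (hOut : Out = {o ∈ σO O | ∃ l ∈ σL L, keyO o = keyL l})
    (Ostar : Set OT) (hOstar : Ostar = {o ∈ σO O | keyO o ∈ keyL '' σL L})
    (Lstar : Set LT) (hLstar : Lstar = {l ∈ σL L | keyL l ∈ keyO '' σO O}) :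
    Ostar = ⋃ t ∈ Out, ({t} : Set OT) ∧
    Lstar = ⋃ t ∈ Out, {l ∈ σL L | keyL l = keyO t} := by
  subst hOut hOstar hLstar
  exact ⟨by rw [Set.biUnion_of_singleton, Set.sep_mem_image_eq_sep_exists],
    Set.sep_mem_image_eq_biUnion_sep keyO keyL (σO O) (σL L)⟩

/-- for a two-table equi-semijoin, the iterative-refinement fixpoint sets
equal the union of lineages over all output rows (zero false positives). -/
theorem stmt_14 {OT LT K : Type*} (keyO : OT → K) (keyL : LT → K)
    (O : Set OT) (L : Set LT) (hO : O.Finite) (hL : L.Finite)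
    (σO : Set OT → Set OT) (σL : Set LT → Set LT)
    (hσO : ∀ X : Set OT, σO X ⊆ X) (hσL : ∀ X : Set LT, σL X ⊆ X)
    (Out : Set OT) (hOut : Out = {o ∈ σO O | ∃ l ∈ σL L, keyO o = keyL l})
    (Ostar : Set OT) (hOstar : Ostar = {o ∈ σO O | keyO o ∈ keyL '' σL L})
    (Lstar : Set LT) (hLstar : Lstar = {l ∈ σL L | keyL l ∈ keyO '' σO O}) :
    Ostar = ⋃ t ∈ Out, ({t} : Set OT) ∧
    Lstar = ⋃ t ∈ Out, {l ∈ σL L | keyL l = keyO t} :=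
  stmt_14_general keyO keyL O L σO σL Out hOut Ostar hOstar Lstar hLstar
end
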